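/- arXiv:0708.2557 — 3 statements merged into one kernel-verified Lean document; each statement's English description precedes it below -/
import Mathlib

section
/- Entropy-Splitting Lemma (general non-smooth case): Let X₁,…,X_m and Z be random variables on a finite probability space such that for all i ≠ j, ∑_z max_{x_i,x_j} P[X_i = x_i, X_j = x_j, Z = z] ≤ 2^{−α}. Then there exists a random variable V over {1,…,m} (a measurable function of (X₁,…,X_m,Z)) such that for any random variable W over {1,…,m} that is independent of (X₁,…,X_m,Z,V) and satisfies max_i P[W = i] ≤ 1/2, the guessing probability of X_W given (V, W, Z) conditioned on V ≠ W is at most 2m · 2^{−α/2}, i.e., ∑_{z,i,j} max_x P[X_W = x, V = j, W = i, Z = z, V ≠ W] ≤ 2m · 2^{−α/2} · P[V ≠ W], equivalently H_min(X_W | V W Z, V ≠ W) ≥ α/2 − log m − 1. -/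
open Finset

/-- Sum over an event defined by a predicate on `f ω`, decomposed over fibers. -/
private lemma sum_event_fiber {Ω T : Type*} [Fintype Ω] [Fintype T] [DecidableEq T]
    (p : Ω → ℝ) (f : Ω → T) (B : Ω → Prop) [DecidablePred B]
    (Q : T → Prop) [DecidablePred Q] :
    (∑ ω ∈ univ.filter (fun ω => B ω ∧ Q (f ω)), p ω)
      = ∑ t ∈ univ.filter Q, ∑ ω ∈ univ.filter (fun ω => B ω ∧ f ω = t), p ω := by
  rw [Finset.sum_filter (s := (univ : Finset T))]
  rw [← Finset.sum_fiberwise (univ.filter (fun ω => B ω ∧ Q (f ω))) f p]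
  refine Finset.sum_congr rfl (fun t _ => ?_)
  by_cases hQ : Q t
  · rw [if_pos hQ, Finset.filter_filter]
    refine Finset.sum_congr ?_ (fun _ _ => rfl)
    apply Finset.filter_congr
    intro ω _
    constructor
    · rintro ⟨⟨hB, _⟩, hf⟩; exact ⟨hB, hf⟩
    · rintro ⟨hB, hf⟩; exact ⟨⟨hB, hf ▸ hQ⟩, hf⟩
  · rw [if_neg hQ, Finset.filter_filter]
    apply Finset.sum_eq_zero
    intro ω hω
    simp only [Finset.mem_filter] at hω
    exact absurd (hω.2.2 ▸ hω.2.1.2) hQ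

/-- Independence on point events extends to arbitrary events on `f`. -/
private lemma indep_event {Ω T : Type*} [Fintype Ω] [Fintype T] [DecidableEq T]
    (p : Ω → ℝ) (f : Ω → T) (A : Ω → Prop) [DecidablePred A]
    (hInd : ∀ t, (∑ ω ∈ univ.filter (fun ω => A ω ∧ f ω = t), p ω)
      = (∑ ω ∈ univ.filter A, p ω) * (∑ ω ∈ univ.filter (fun ω => f ω = t), p ω))
    (Q : T → Prop) [DecidablePred Q] :
    (∑ ω ∈ univ.filter (fun ω => A ω ∧ Q (f ω)), p ω)
      = (∑ ω ∈ univ.filter A, p ω) * (∑ ω ∈ univ.filter (fun ω => Q (f ω)), p ω) := by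
  rw [sum_event_fiber p f A Q]
  have h2 : (∑ ω ∈ univ.filter (fun ω => Q (f ω)), p ω)
      = ∑ t ∈ univ.filter Q, ∑ ω ∈ univ.filter (fun ω => f ω = t), p ω := by
    have := sum_event_fiber p f (fun _ => True) Q
    simpa using this
  rw [h2, Finset.mul_sum]
  exact Finset.sum_congr rfl (fun t _ => hInd t)

private lemma sum_filter_iff {Ω : Type*} [Fintype Ω] (p : Ω → ℝ)
    (P Q : Ω → Prop) [DecidablePred P] [DecidablePred Q] (h : ∀ ω, P ω ↔ Q ω) :
    (∑ ω ∈ univ.filter P, p ω) = ∑ ω ∈ univ.filter Q, p ω := by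
  refine Finset.sum_congr ?_ (fun _ _ => rfl)
  ext ω
  simp [h ω]

private lemma sum_filter_mono {Ω : Type*} [Fintype Ω] (p : Ω → ℝ) (hp : ∀ ω, 0 ≤ p ω)
    (P Q : Ω → Prop) [DecidablePred P] [DecidablePred Q] (h : ∀ ω, P ω → Q ω) :
    (∑ ω ∈ univ.filter P, p ω) ≤ ∑ ω ∈ univ.filter Q, p ω := by
  apply Finset.sum_le_sum_of_subset_of_nonneg
  · intro ω hω
    simp only [Finset.mem_filter, Finset.mem_univ, true_and] at *
    exact h ω hω
  · exact fun ω _ _ => hp ω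

private lemma sum_filter_zero {Ω : Type*} [Fintype Ω] (p : Ω → ℝ)
    (P : Ω → Prop) [DecidablePred P] (h : ∀ ω, ¬ P ω) :
    (∑ ω ∈ univ.filter P, p ω) = 0 := by
  rw [Finset.filter_false_of_mem (fun ω _ => h ω), Finset.sum_empty]

/-- Entropy-Splitting Lemma (general non-smooth case): if every pair `(X_i, X_j)`,
`i ≠ j`, has min-entropy at least `α` given `Z`, then there is a random variable `V`
over `{1,…,m}` (a function of `(X₁,…,X_m, Z)`) such that for every `W` over `{1,…,m}`
independent of `(X₁,…,X_m, Z, V)` with `max_i P[W = i] ≤ 1/2`, the guessing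
probability of `X_W` given `(V, W, Z)` conditioned on `V ≠ W` is at most
`2 m 2^{-α/2}`; i.e. `∑_{z,i≠j} max_x P[X_W = x, V = j, W = i, Z = z]
≤ 2 m 2^{-α/2} · P[V ≠ W]`. -/
theorem entropy_splitting
    {Ω 𝒳 𝒵 : Type*} [Fintype Ω] [Fintype 𝒳] [Fintype 𝒵]
    [Nonempty 𝒳] [DecidableEq 𝒳] [DecidableEq 𝒵]
    (m : ℕ) (hm : 0 < m)
    (p : Ω → ℝ) (hp : ∀ ω, 0 ≤ p ω) (hsum : ∑ ω, p ω = 1)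
    (X : Fin m → Ω → 𝒳) (Z : Ω → 𝒵) (α : ℝ)
    (hα : ∀ i j : Fin m, i ≠ j →
      ∑ z, (univ : Finset (𝒳 × 𝒳)).sup' univ_nonempty (fun xx =>
        ∑ ω ∈ univ.filter (fun ω => X i ω = xx.1 ∧ X j ω = xx.2 ∧ Z ω = z), p ω)
        ≤ (2:ℝ) ^ (-α)) :
    ∃ V : Ω → Fin m,
      (∃ h : ((Fin m → 𝒳) × 𝒵) → Fin m, ∀ ω, V ω = h (fun i => X i ω, Z ω)) ∧
      ∀ W : Ω → Fin m,
        (∀ (i : Fin m) (t : (Fin m → 𝒳) × 𝒵 × Fin m),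
          (∑ ω ∈ univ.filter
              (fun ω => W ω = i ∧ ((fun j => X j ω), Z ω, V ω) = t), p ω)
            = (∑ ω ∈ univ.filter (fun ω => W ω = i), p ω)
              * (∑ ω ∈ univ.filter
                  (fun ω => ((fun j => X j ω), Z ω, V ω) = t), p ω)) →
        (∀ i : Fin m, (∑ ω ∈ univ.filter (fun ω => W ω = i), p ω) ≤ 1 / 2) →
        (∑ z, ∑ i : Fin m, ∑ j : Fin m,
            if i ≠ j then
              (univ : Finset 𝒳).sup' univ_nonempty (fun x =>
                ∑ ω ∈ univ.filter
                  (fun ω => X (W ω) ω = x ∧ V ω = j ∧ W ω = i ∧ Z ω = z), p ω)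
            else 0)
          ≤ 2 * m * (2:ℝ) ^ (-α/2)
              * (∑ ω ∈ univ.filter (fun ω => V ω ≠ W ω), p ω) := by
  classical
  -- probability of events
  set Pz : 𝒵 → ℝ := fun z => ∑ ω ∈ univ.filter (fun ω => Z ω = z), p ω with hPzdef
  set Pxz : Fin m → 𝒳 → 𝒵 → ℝ :=
    fun j x z => ∑ ω ∈ univ.filter (fun ω => X j ω = x ∧ Z ω = z), p ω with hPxzdef
  set Heavy : Fin m → 𝒳 → 𝒵 → Prop :=
    fun j x z => (2:ℝ) ^ (-α/2) * Pz z ≤ Pxz j x z with hHeavydef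
  set hfun : ((Fin m → 𝒳) × 𝒵) → Fin m := fun t =>
    if hs : (univ.filter (fun j : Fin m => Heavy j (t.1 j) t.2)).Nonempty
    then (univ.filter (fun j : Fin m => Heavy j (t.1 j) t.2)).min' hs
    else ⟨m - 1, by omega⟩ with hhfundef
  set V : Ω → Fin m := fun ω => hfun (fun i => X i ω, Z ω) with hVdef
  have hpos2 : (0:ℝ) < (2:ℝ) ^ (-α/2) := Real.rpow_pos_of_pos two_pos _
  -- property (A): indices below V are light
  have hlight : ∀ ω (j : Fin m), V ω = j → ∀ i : Fin m, i < j →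
      ¬ Heavy i (X i ω) (Z ω) := by
    intro ω j hVj i hij hHi
    have hVj' : hfun (fun i => X i ω, Z ω) = j := hVj
    rw [hhfundef] at hVj'
    dsimp only at hVj'
    split_ifs at hVj' with hs
    · have hi : i ∈ univ.filter
          (fun k : Fin m => Heavy k ((fun i => X i ω, Z ω).1 k) (fun i => X i ω, Z ω).2) := by
        simp only [Finset.mem_filter, Finset.mem_univ, true_and]
        exact hHi
      have := Finset.min'_le _ i hi
      rw [hVj'] at this
      exact absurd this (not_le.2 hij)
    · refine hs ⟨i, ?_⟩
      simp only [Finset.mem_filter, Finset.mem_univ, true_and]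
      exact hHi
  -- property (B): if V < some index, V itself is heavy
  have hheavy : ∀ ω (j : Fin m), V ω = j → ∀ i : Fin m, j < i →
      Heavy j (X j ω) (Z ω) := by
    intro ω j hVj i hij
    have hVj' : hfun (fun i => X i ω, Z ω) = j := hVj
    rw [hhfundef] at hVj'
    dsimp only at hVj'
    split_ifs at hVj' with hs
    · have := Finset.min'_mem _ hs
      rw [hVj'] at this
      simpa using (Finset.mem_filter.1 this).2
    · exfalso
      have h1 : (j : ℕ) = m - 1 := by rw [← hVj']
      have h2 : (j : ℕ) < (i : ℕ) := hij
      have h3 : (i : ℕ) < m := i.isLt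
      omega
  refine ⟨V, ⟨hfun, fun ω => rfl⟩, ?_⟩
  intro W hInd hW
  set f : Ω → (Fin m → 𝒳) × 𝒵 × Fin m := fun ω => ((fun j => X j ω), Z ω, V ω) with hfdef
  set Pw : Fin m → ℝ := fun i => ∑ ω ∈ univ.filter (fun ω => W ω = i), p ω with hPwdef
  have hPw0 : ∀ i, 0 ≤ Pw i := fun i => Finset.sum_nonneg (fun ω _ => hp ω)
  have hPwsum : ∑ i, Pw i = 1 := by
    have h := Finset.sum_fiberwise (univ : Finset Ω) W p
    rw [hsum] at h
    exact h
  have hPz0 : ∀ z, 0 ≤ Pz z := fun z => Finset.sum_nonneg (fun ω _ => hp ω)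
  have hPzsum : ∑ z, Pz z = 1 := by
    have h := Finset.sum_fiberwise (univ : Finset Ω) Z p
    rw [hsum] at h
    exact h
  have hr2 : (0:ℝ) ≤ (2:ℝ) ^ (α/2) := (Real.rpow_pos_of_pos two_pos _).le
  -- the key per-pair bound
  have hT : ∀ i j : Fin m, i ≠ j →
      (∑ z, (univ : Finset 𝒳).sup' univ_nonempty (fun x =>
        ∑ ω ∈ univ.filter (fun ω => X i ω = x ∧ V ω = j ∧ Z ω = z), p ω))
        ≤ (2:ℝ) ^ (-α/2) := by
    intro i j hij
    rcases lt_or_gt_of_ne hij with hlt | hgt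
    · -- i < j : index i is light on the event V = j
      have hz : ∀ z, (univ : Finset 𝒳).sup' univ_nonempty (fun x =>
          ∑ ω ∈ univ.filter (fun ω => X i ω = x ∧ V ω = j ∧ Z ω = z), p ω)
          ≤ (2:ℝ) ^ (-α/2) * Pz z := by
        intro z
        apply Finset.sup'_le
        intro x _
        by_cases hx : Heavy i x z
        · have h0 : (∑ ω ∈ univ.filter (fun ω => X i ω = x ∧ V ω = j ∧ Z ω = z), p ω) = 0 := by
            apply sum_filter_zero
            rintro ω ⟨hx1, hVω, hz1⟩
            exact hlight ω j hVω i hlt (by rw [hx1, hz1]; exact hx)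
          rw [h0]
          exact mul_nonneg hpos2.le (hPz0 z)
        · calc (∑ ω ∈ univ.filter (fun ω => X i ω = x ∧ V ω = j ∧ Z ω = z), p ω)
              ≤ Pxz i x z :=
                sum_filter_mono p hp _ _ (fun ω h => ⟨h.1, h.2.2⟩)
            _ ≤ (2:ℝ) ^ (-α/2) * Pz z := (not_le.1 hx).le
      calc (∑ z, (univ : Finset 𝒳).sup' univ_nonempty (fun x =>
            ∑ ω ∈ univ.filter (fun ω => X i ω = x ∧ V ω = j ∧ Z ω = z), p ω))
          ≤ ∑ z, (2:ℝ) ^ (-α/2) * Pz z := Finset.sum_le_sum (fun z _ => hz z)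
        _ = (2:ℝ) ^ (-α/2) := by rw [← Finset.mul_sum, hPzsum, mul_one]
    · -- j < i : index j is heavy on the event V = j, use the pair bound
      set M : 𝒵 → ℝ := fun z => (univ : Finset (𝒳 × 𝒳)).sup' univ_nonempty (fun xx =>
        ∑ ω ∈ univ.filter (fun ω => X j ω = xx.1 ∧ X i ω = xx.2 ∧ Z ω = z), p ω) with hMdef
      have hM : ∑ z, M z ≤ (2:ℝ) ^ (-α) := hα j i (Ne.symm hij)
      have hM0 : ∀ z, 0 ≤ M z := by
        intro z
        rw [hMdef]
        obtain ⟨x⟩ := ‹Nonempty 𝒳›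
        exact le_trans (Finset.sum_nonneg (fun ω _ => hp ω))
          (Finset.le_sup' (fun xx : 𝒳 × 𝒳 =>
            ∑ ω ∈ univ.filter (fun ω => X j ω = xx.1 ∧ X i ω = xx.2 ∧ Z ω = z), p ω)
            (Finset.mem_univ (x, x)))
      have hz : ∀ z, (univ : Finset 𝒳).sup' univ_nonempty (fun x =>
          ∑ ω ∈ univ.filter (fun ω => X i ω = x ∧ V ω = j ∧ Z ω = z), p ω)
          ≤ (2:ℝ) ^ (α/2) * M z := by
        intro z
        by_cases hPze : Pz z = 0
        · apply Finset.sup'_le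
          intro x _
          calc (∑ ω ∈ univ.filter (fun ω => X i ω = x ∧ V ω = j ∧ Z ω = z), p ω)
              ≤ Pz z := sum_filter_mono p hp _ _ (fun ω h => h.2.2)
            _ = 0 := hPze
            _ ≤ (2:ℝ) ^ (α/2) * M z := mul_nonneg hr2 (hM0 z)
        · have hPzpos : 0 < Pz z := lt_of_le_of_ne (hPz0 z) (Ne.symm hPze)
          set Hz := univ.filter (fun y : 𝒳 => Heavy j y z) with hHzdef
          have hcard : (Hz.card : ℝ) * ((2:ℝ) ^ (-α/2) * Pz z) ≤ Pz z := by
            calc (Hz.card : ℝ) * ((2:ℝ) ^ (-α/2) * Pz z)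
                ≤ ∑ y ∈ Hz, Pxz j y z := by
                  have h := Finset.card_nsmul_le_sum Hz (fun y => Pxz j y z)
                    ((2:ℝ) ^ (-α/2) * Pz z) (fun y hy => (Finset.mem_filter.1 hy).2)
                  simpa [nsmul_eq_mul] using h
              _ ≤ ∑ y ∈ univ, Pxz j y z := by
                  apply Finset.sum_le_sum_of_subset_of_nonneg (Finset.subset_univ _)
                  exact fun y _ _ => Finset.sum_nonneg (fun ω _ => hp ω)
              _ = Pz z := by
                  simp only [hPxzdef, hPzdef]
                  rw [← Finset.sum_fiberwise (univ.filter (fun ω => Z ω = z)) (fun ω => X j ω) p]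
                  refine Finset.sum_congr rfl (fun y _ => ?_)
                  rw [Finset.filter_filter]
                  exact sum_filter_iff p _ _ (fun ω => by tauto)
          have hcard' : (Hz.card : ℝ) ≤ (2:ℝ) ^ (α/2) := by
            have h2 : (Hz.card : ℝ) * (2:ℝ) ^ (-α/2) ≤ 1 := by
              rw [← mul_assoc] at hcard
              exact le_of_mul_le_mul_right (by rw [one_mul]; exact hcard) hPzpos
            have hmul : (2:ℝ) ^ (-α/2) * (2:ℝ) ^ (α/2) = 1 := by
              rw [← Real.rpow_add two_pos, show -α/2 + α/2 = 0 by ring, Real.rpow_zero]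
            calc (Hz.card : ℝ) = (Hz.card * (2:ℝ) ^ (-α/2)) * (2:ℝ) ^ (α/2) := by
                  rw [mul_assoc, hmul, mul_one]
              _ ≤ 1 * (2:ℝ) ^ (α/2) := mul_le_mul_of_nonneg_right h2 hr2
              _ = (2:ℝ) ^ (α/2) := one_mul _
          apply Finset.sup'_le
          intro x _
          have hdec : (∑ ω ∈ univ.filter (fun ω => X i ω = x ∧ V ω = j ∧ Z ω = z), p ω)
              = ∑ y, ∑ ω ∈ univ.filter
                  (fun ω => (X i ω = x ∧ V ω = j ∧ Z ω = z) ∧ X j ω = y), p ω := by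
            rw [← Finset.sum_fiberwise
              (univ.filter (fun ω => X i ω = x ∧ V ω = j ∧ Z ω = z)) (fun ω => X j ω) p]
            exact Finset.sum_congr rfl (fun y _ => by rw [Finset.filter_filter])
          rw [hdec]
          calc (∑ y, ∑ ω ∈ univ.filter
                  (fun ω => (X i ω = x ∧ V ω = j ∧ Z ω = z) ∧ X j ω = y), p ω)
              ≤ ∑ y, (if y ∈ Hz then
                  (∑ ω ∈ univ.filter (fun ω => X j ω = y ∧ X i ω = x ∧ Z ω = z), p ω)
                  else 0) := by
                apply Finset.sum_le_sum
                intro y _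
                by_cases hy : y ∈ Hz
                · rw [if_pos hy]
                  exact sum_filter_mono p hp _ _
                    (fun ω h => ⟨h.2, h.1.1, h.1.2.2⟩)
                · rw [if_neg hy]
                  apply le_of_eq
                  apply sum_filter_zero
                  rintro ω ⟨⟨hx1, hVω, hz1⟩, hy1⟩
                  apply hy
                  rw [hHzdef, Finset.mem_filter]
                  refine ⟨Finset.mem_univ _, ?_⟩
                  have := hheavy ω j hVω i hgt
                  rwa [hy1, hz1] at this
            _ = ∑ y ∈ Hz,
                  (∑ ω ∈ univ.filter (fun ω => X j ω = y ∧ X i ω = x ∧ Z ω = z), p ω) := by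
                rw [Finset.sum_ite_mem, Finset.univ_inter]
            _ ≤ ∑ y ∈ Hz, M z := by
                apply Finset.sum_le_sum
                intro y _
                exact Finset.le_sup' (fun xx : 𝒳 × 𝒳 =>
                  ∑ ω ∈ univ.filter (fun ω => X j ω = xx.1 ∧ X i ω = xx.2 ∧ Z ω = z), p ω)
                  (Finset.mem_univ (y, x))
            _ = (Hz.card : ℝ) * M z := by rw [Finset.sum_const, nsmul_eq_mul]
            _ ≤ (2:ℝ) ^ (α/2) * M z := mul_le_mul_of_nonneg_right hcard' (hM0 z)
      calc (∑ z, (univ : Finset 𝒳).sup' univ_nonempty (fun x =>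
            ∑ ω ∈ univ.filter (fun ω => X i ω = x ∧ V ω = j ∧ Z ω = z), p ω))
          ≤ ∑ z, (2:ℝ) ^ (α/2) * M z := Finset.sum_le_sum (fun z _ => hz z)
        _ = (2:ℝ) ^ (α/2) * ∑ z, M z := by rw [Finset.mul_sum]
        _ ≤ (2:ℝ) ^ (α/2) * (2:ℝ) ^ (-α) := mul_le_mul_of_nonneg_left hM hr2
        _ = (2:ℝ) ^ (-α/2) := by
            rw [← Real.rpow_add two_pos]
            congr 1
            ring
  -- independence consequences
  have hindep1 : ∀ (i j : Fin m) (x : 𝒳) (z : 𝒵),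
      (∑ ω ∈ univ.filter (fun ω => X i ω = x ∧ V ω = j ∧ W ω = i ∧ Z ω = z), p ω)
      = Pw i * (∑ ω ∈ univ.filter (fun ω => X i ω = x ∧ V ω = j ∧ Z ω = z), p ω) := by
    intro i j x z
    have h := indep_event p f (fun ω => W ω = i) (hInd i)
      (fun t => t.1 i = x ∧ t.2.2 = j ∧ t.2.1 = z)
    calc (∑ ω ∈ univ.filter (fun ω => X i ω = x ∧ V ω = j ∧ W ω = i ∧ Z ω = z), p ω)
        = ∑ ω ∈ univ.filter (fun ω => W ω = i ∧
            ((fun t : (Fin m → 𝒳) × 𝒵 × Fin m => t.1 i = x ∧ t.2.2 = j ∧ t.2.1 = z) (f ω))), p ω :=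
          sum_filter_iff p _ _ (fun ω => by simp only [hfdef]; tauto)
      _ = Pw i * (∑ ω ∈ univ.filter (fun ω =>
            ((fun t : (Fin m → 𝒳) × 𝒵 × Fin m => t.1 i = x ∧ t.2.2 = j ∧ t.2.1 = z) (f ω))), p ω) := h
      _ = Pw i * (∑ ω ∈ univ.filter (fun ω => X i ω = x ∧ V ω = j ∧ Z ω = z), p ω) := by
          congr 1
  -- P[V ≠ W] ≥ 1/2
  have hVsum : ∑ v, (∑ ω ∈ univ.filter (fun ω => V ω = v), p ω) = 1 := by
    have h := Finset.sum_fiberwise (univ : Finset Ω) V p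
    rw [hsum] at h
    exact h
  have hVeq : (∑ ω ∈ univ.filter (fun ω => V ω = W ω), p ω) ≤ 1/2 := by
    have hdec : (∑ ω ∈ univ.filter (fun ω => V ω = W ω), p ω)
        = ∑ v, ∑ ω ∈ univ.filter (fun ω => V ω = W ω ∧ W ω = v), p ω := by
      rw [← Finset.sum_fiberwise (univ.filter (fun ω => V ω = W ω)) W p]
      exact Finset.sum_congr rfl (fun v _ => by rw [Finset.filter_filter])
    rw [hdec]
    calc (∑ v, ∑ ω ∈ univ.filter (fun ω => V ω = W ω ∧ W ω = v), p ω)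
        = ∑ v, Pw v * (∑ ω ∈ univ.filter (fun ω => V ω = v), p ω) := by
          refine Finset.sum_congr rfl (fun v _ => ?_)
          have h := indep_event p f (fun ω => W ω = v) (hInd v)
            (fun t => t.2.2 = v)
          calc (∑ ω ∈ univ.filter (fun ω => V ω = W ω ∧ W ω = v), p ω)
              = ∑ ω ∈ univ.filter (fun ω => W ω = v ∧
                  ((fun t : (Fin m → 𝒳) × 𝒵 × Fin m => t.2.2 = v) (f ω))), p ω :=
                sum_filter_iff p _ _ (fun ω => by
                  simp only [hfdef]
                  constructor
                  · rintro ⟨h1, h2⟩; exact ⟨h2, by rw [h1, h2]⟩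
                  · rintro ⟨h1, h2⟩; exact ⟨by rw [h2, h1], h1⟩)
            _ = Pw v * (∑ ω ∈ univ.filter (fun ω =>
                  ((fun t : (Fin m → 𝒳) × 𝒵 × Fin m => t.2.2 = v) (f ω))), p ω) := h
            _ = Pw v * (∑ ω ∈ univ.filter (fun ω => V ω = v), p ω) := by
                congr 1
      _ ≤ ∑ v, (1/2) * (∑ ω ∈ univ.filter (fun ω => V ω = v), p ω) := by
          apply Finset.sum_le_sum
          intro v _
          exact mul_le_mul_of_nonneg_right (hW v) (Finset.sum_nonneg (fun ω _ => hp ω))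
      _ = 1/2 := by rw [← Finset.mul_sum, hVsum, mul_one]
  have hVne : (1:ℝ)/2 ≤ ∑ ω ∈ univ.filter (fun ω => V ω ≠ W ω), p ω := by
    have hsplit := Finset.sum_filter_add_sum_filter_not (univ : Finset Ω)
      (fun ω => V ω = W ω) p
    rw [hsum] at hsplit
    have heq : (∑ ω ∈ univ.filter (fun ω => ¬ V ω = W ω), p ω)
        = ∑ ω ∈ univ.filter (fun ω => V ω ≠ W ω), p ω :=
      sum_filter_iff p _ _ (fun ω => Iff.rfl)
    linarith
  -- assemble
  have hrw : (0:ℝ) ≤ (2:ℝ) ^ (-α/2) := hpos2.le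
  calc (∑ z, ∑ i : Fin m, ∑ j : Fin m,
        if i ≠ j then
          (univ : Finset 𝒳).sup' univ_nonempty (fun x =>
            ∑ ω ∈ univ.filter
              (fun ω => X (W ω) ω = x ∧ V ω = j ∧ W ω = i ∧ Z ω = z), p ω)
        else 0)
      = ∑ i : Fin m, ∑ j : Fin m, ∑ z,
          (if i ≠ j then
            (univ : Finset 𝒳).sup' univ_nonempty (fun x =>
              ∑ ω ∈ univ.filter
                (fun ω => X (W ω) ω = x ∧ V ω = j ∧ W ω = i ∧ Z ω = z), p ω)
          else 0) := by
        rw [Finset.sum_comm]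
        exact Finset.sum_congr rfl (fun i _ => Finset.sum_comm)
    _ ≤ ∑ i : Fin m, Pw i * (m * (2:ℝ) ^ (-α/2)) := by
        apply Finset.sum_le_sum
        intro i _
        have hj : ∀ j : Fin m, (∑ z,
            (if i ≠ j then
              (univ : Finset 𝒳).sup' univ_nonempty (fun x =>
                ∑ ω ∈ univ.filter
                  (fun ω => X (W ω) ω = x ∧ V ω = j ∧ W ω = i ∧ Z ω = z), p ω)
            else 0)) ≤ Pw i * (2:ℝ) ^ (-α/2) := by
          intro j
          by_cases hij : i ≠ j
          · simp only [if_pos hij]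
            calc (∑ z, (univ : Finset 𝒳).sup' univ_nonempty (fun x =>
                  ∑ ω ∈ univ.filter
                    (fun ω => X (W ω) ω = x ∧ V ω = j ∧ W ω = i ∧ Z ω = z), p ω))
                ≤ ∑ z, Pw i * ((univ : Finset 𝒳).sup' univ_nonempty (fun x =>
                    ∑ ω ∈ univ.filter
                      (fun ω => X i ω = x ∧ V ω = j ∧ Z ω = z), p ω)) := by
                  apply Finset.sum_le_sum
                  intro z _
                  apply Finset.sup'_le
                  intro x _
                  have hwsub : (∑ ω ∈ univ.filter
                      (fun ω => X (W ω) ω = x ∧ V ω = j ∧ W ω = i ∧ Z ω = z), p ω)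
                      = ∑ ω ∈ univ.filter
                        (fun ω => X i ω = x ∧ V ω = j ∧ W ω = i ∧ Z ω = z), p ω := by
                    apply sum_filter_iff
                    intro ω
                    constructor
                    · rintro ⟨h1, h2, h3, h4⟩; rw [h3] at h1; exact ⟨h1, h2, h3, h4⟩
                    · rintro ⟨h1, h2, h3, h4⟩; rw [← h3] at h1; exact ⟨h1, h2, h3, h4⟩
                  rw [hwsub, hindep1 i j x z]
                  apply mul_le_mul_of_nonneg_left _ (hPw0 i)
                  exact Finset.le_sup' (fun x =>
                    ∑ ω ∈ univ.filter (fun ω => X i ω = x ∧ V ω = j ∧ Z ω = z), p ω)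
                    (Finset.mem_univ x)
              _ = Pw i * (∑ z, (univ : Finset 𝒳).sup' univ_nonempty (fun x =>
                    ∑ ω ∈ univ.filter
                      (fun ω => X i ω = x ∧ V ω = j ∧ Z ω = z), p ω)) := by
                  rw [Finset.mul_sum]
              _ ≤ Pw i * (2:ℝ) ^ (-α/2) :=
                  mul_le_mul_of_nonneg_left (hT i j hij) (hPw0 i)
          · simp only [if_neg hij, Finset.sum_const_zero]
            exact mul_nonneg (hPw0 i) hrw
        calc (∑ j : Fin m, ∑ z,
              (if i ≠ j then
                (univ : Finset 𝒳).sup' univ_nonempty (fun x =>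
                  ∑ ω ∈ univ.filter
                    (fun ω => X (W ω) ω = x ∧ V ω = j ∧ W ω = i ∧ Z ω = z), p ω)
              else 0))
            ≤ ∑ _j : Fin m, Pw i * (2:ℝ) ^ (-α/2) := Finset.sum_le_sum (fun j _ => hj j)
          _ = Pw i * (m * (2:ℝ) ^ (-α/2)) := by
              rw [Finset.sum_const, nsmul_eq_mul]
              simp [Finset.card_univ]
              ring
    _ = m * (2:ℝ) ^ (-α/2) := by
        rw [← Finset.sum_mul, hPwsum, one_mul]
    _ ≤ 2 * m * (2:ℝ) ^ (-α/2) * (∑ ω ∈ univ.filter (fun ω => V ω ≠ W ω), p ω) := by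
        have h1 : (m : ℝ) * (2:ℝ) ^ (-α/2)
            = 2 * m * (2:ℝ) ^ (-α/2) * (1/2) := by ring
        rw [h1]
        apply mul_le_mul_of_nonneg_left hVne
        positivity
end

section
/- In the proof of the entropy-splitting lemma, for i > j the following bound holds: if ∑_z P_Z(z) · max_{x_i,x_j} P[X_i = x_i, X_j = x_j | Z = z] ≤ 2^{−α}, and V is the random variable such that the event V = j implies P[X_j = x_j | Z = z] ≥ 2^{−α/2} for the realized values x_j, z, then ∑_z P_Z(z) · max_{x_i} ∑_{x_j} P[X_i = x_i, X_j = x_j, V = j | Z = z] ≤ 2^{−α/2}. The key step: for each z there are at most 2^{α/2} values x_j with P[X_j = x_j | Z = z] ≥ 2^{−α/2}. -/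
open Finset

/-!
Fix `z` and write `c = 2^(-α/2)`. On the event `A` the value of `X_j` is heavy for `Z = z`,
i.e. has conditional probability at least `c`, and a distribution has at most `c⁻¹` heavy
points. Each heavy `x_j` contributes at most `max_{x_i, x_j} P[X_i = x_i, X_j = x_j, Z = z]`, so
the `z`-term of the conclusion is at most `c⁻¹` times that of the hypothesis; summing over `z`
gives `2^(α/2) · 2^(-α) = 2^(-α/2)`.
-/

section Counting

variable {ι : Type*} [Fintype ι]

theorem card_filter_heavy_le_inv {q : ι → ℝ} (hq : ∀ i, 0 ≤ q i) (hpos : 0 < ∑ i, q i)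
    {c : ℝ} (hc : 0 < c) : (#{i | c * ∑ j, q j ≤ q i} : ℝ) ≤ c⁻¹ := by
  set P := ∑ i, q i
  have hmass : #{i | c * P ≤ q i} • (c * P) ≤ P :=
    (card_nsmul_le_sum _ q _ fun i hi => (mem_filter.1 hi).2).trans
      (sum_le_sum_of_subset_of_nonneg (subset_univ _) fun i _ _ => hq i)
  rw [← one_mul c⁻¹, le_mul_inv_iff₀ hc]
  refine le_of_mul_le_mul_right ?_ hpos
  rw [one_mul]
  rwa [nsmul_eq_mul, ← mul_assoc] at hmass

theorem sum_le_inv_mul_of_support_heavy [Nonempty ι] {w q : ι → ℝ} {M c : ℝ} (hc : 0 < c)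
    (hw : ∀ i, 0 ≤ w i) (hwq : ∀ i, w i ≤ q i) (hwM : ∀ i, w i ≤ M)
    (hheavy : ∀ i, w i ≠ 0 → c * ∑ j, q j ≤ q i) : ∑ i, w i ≤ c⁻¹ * M := by
  have hM : 0 ≤ M := (hw (Classical.arbitrary ι)).trans (hwM _)
  have hq : ∀ i, 0 ≤ q i := fun i => (hw i).trans (hwq i)
  rcases (sum_nonneg fun i _ => hq i).eq_or_lt with hzero | hpos
  · calc ∑ i, w i ≤ ∑ i, q i := sum_le_sum fun i _ => hwq i
      _ = 0 := hzero.symm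
      _ ≤ c⁻¹ * M := by positivity
  · calc ∑ i, w i = ∑ i with c * ∑ j, q j ≤ q i, w i :=
          (sum_filter_of_ne fun i _ => hheavy i).symm
      _ ≤ #{i | c * ∑ j, q j ≤ q i} • M := sum_le_card_nsmul _ _ _ fun i _ => hwM i
      _ ≤ c⁻¹ * M := by
          rw [nsmul_eq_mul]
          exact mul_le_mul_of_nonneg_right (card_filter_heavy_le_inv hq hpos hc) hM

end Counting

section Mass

variable {Ω : Type*} [Fintype Ω] (p : Ω → ℝ)

theorem sum_filter_le_sum_filter_of_imp (hp : ∀ ω, 0 ≤ p ω) {E F : Ω → Prop}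
    [DecidablePred E] [DecidablePred F] (h : ∀ ω, E ω → F ω) :
    ∑ ω with E ω, p ω ≤ ∑ ω with F ω, p ω :=
  sum_le_sum_of_subset_of_nonneg (monotone_filter_right _ fun ω _ => h ω) fun ω _ _ => hp ω

theorem sum_fiberwise_filter {α : Type*} [Fintype α] [DecidableEq α] (X : Ω → α)
    (E : Ω → Prop) [DecidablePred E] :
    ∑ x, ∑ ω with X ω = x ∧ E ω, p ω = ∑ ω with E ω, p ω := by
  rw [← sum_fiberwise _ X p]
  simp only [filter_filter, and_comm]

theorem sup'_sum_filter_heavy_le {𝒳i 𝒳j 𝒵 : Type*} [Fintype 𝒳i] [Fintype 𝒳j]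
    [Nonempty 𝒳i] [Nonempty 𝒳j] [DecidableEq 𝒳i] [DecidableEq 𝒳j] [DecidableEq 𝒵]
    (hp : ∀ ω, 0 ≤ p ω) (Xi : Ω → 𝒳i) (Xj : Ω → 𝒳j) (Z : Ω → 𝒵) (A : Ω → Prop)
    [DecidablePred A] {c : ℝ} (hc : 0 < c)
    (hA : ∀ ω, A ω → c * ∑ ω' with Z ω' = Z ω, p ω' ≤ ∑ ω' with Xj ω' = Xj ω ∧ Z ω' = Z ω, p ω')
    (z : 𝒵) :
    (univ : Finset 𝒳i).sup' univ_nonempty (fun xi =>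
        ∑ xj, ∑ ω with Xi ω = xi ∧ Xj ω = xj ∧ A ω ∧ Z ω = z, p ω)
      ≤ c⁻¹ * (univ : Finset (𝒳i × 𝒳j)).sup' univ_nonempty (fun xx =>
        ∑ ω with Xi ω = xx.1 ∧ Xj ω = xx.2 ∧ Z ω = z, p ω) := by
  refine sup'_le _ _ fun xi _ => sum_le_inv_mul_of_support_heavy
    (q := fun xj => ∑ ω with Xj ω = xj ∧ Z ω = z, p ω) hc
    (fun xj => sum_nonneg fun ω _ => hp ω) (fun xj => ?_) (fun xj => ?_) fun xj hxj => ?_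
  · exact sum_filter_le_sum_filter_of_imp p hp fun ω h => ⟨h.2.1, h.2.2.2⟩
  · exact (sum_filter_le_sum_filter_of_imp p hp fun ω h => ⟨h.1, h.2.1, h.2.2.2⟩).trans
      (le_sup' (fun xx : 𝒳i × 𝒳j => ∑ ω with Xi ω = xx.1 ∧ Xj ω = xx.2 ∧ Z ω = z, p ω)
        (mem_univ (xi, xj)))
  · obtain ⟨ω, hω, -⟩ := exists_ne_zero_of_sum_ne_zero hxj
    obtain ⟨-, rfl, hAω, rfl⟩ := (mem_filter.1 hω).2
    rw [sum_fiberwise_filter p Xj]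
    exact hA ω hAω

end Mass

theorem entropy_splitting_key_step_general
    {Ω 𝒳i 𝒳j 𝒵 : Type*} [Fintype Ω] [Fintype 𝒳i] [Fintype 𝒳j] [Fintype 𝒵]
    [Nonempty 𝒳i] [Nonempty 𝒳j] [DecidableEq 𝒳i] [DecidableEq 𝒳j] [DecidableEq 𝒵]
    (p : Ω → ℝ) (hp : ∀ ω, 0 ≤ p ω)
    (Xi : Ω → 𝒳i) (Xj : Ω → 𝒳j) (Z : Ω → 𝒵) (A : Ω → Prop) [DecidablePred A]
    (α : ℝ)
    (hα : ∑ z, (univ : Finset (𝒳i × 𝒳j)).sup' univ_nonempty (fun xx =>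
        ∑ ω ∈ univ.filter (fun ω => Xi ω = xx.1 ∧ Xj ω = xx.2 ∧ Z ω = z), p ω)
        ≤ (2:ℝ) ^ (-α))
    (hA : ∀ ω, A ω →
      (2:ℝ) ^ (-α/2) * (∑ ω' ∈ univ.filter (fun ω' => Z ω' = Z ω), p ω')
        ≤ ∑ ω' ∈ univ.filter (fun ω' => Xj ω' = Xj ω ∧ Z ω' = Z ω), p ω') :
    ∑ z, (univ : Finset 𝒳i).sup' univ_nonempty (fun xi =>
        ∑ xj, ∑ ω ∈ univ.filter
          (fun ω => Xi ω = xi ∧ Xj ω = xj ∧ A ω ∧ Z ω = z), p ω)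
      ≤ (2:ℝ) ^ (-α/2) := by
  have hc : (0:ℝ) < 2 ^ (-α/2) := by positivity
  calc _ ≤ ∑ z, ((2:ℝ) ^ (-α/2))⁻¹ * (univ : Finset (𝒳i × 𝒳j)).sup' univ_nonempty (fun xx =>
          ∑ ω with Xi ω = xx.1 ∧ Xj ω = xx.2 ∧ Z ω = z, p ω) :=
        sum_le_sum fun z _ => sup'_sum_filter_heavy_le p hp Xi Xj Z A hc hA z
    _ ≤ ((2:ℝ) ^ (-α/2))⁻¹ * 2 ^ (-α) := by
        rw [← mul_sum]
        exact mul_le_mul_of_nonneg_left hα (inv_nonneg.2 hc.le)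
    _ = 2 ^ (-α/2) := by
        rw [← Real.rpow_neg zero_le_two, ← Real.rpow_add two_pos]
        ring_nf

/-- Key step in the entropy-splitting lemma (case `i > j`): if the pair `(X_i, X_j)`
has min-entropy at least `α` given `Z`, and the event `A` (i.e. `V = j`) implies that
the realized value of `X_j` is "heavy" given `Z` (conditional probability at least
`2^{-α/2}`), then `∑_z max_{x_i} ∑_{x_j} P[X_i = x_i, X_j = x_j, A, Z = z] ≤ 2^{-α/2}`.
The key counting fact: for each `z` there are at most `2^{α/2}` heavy values `x_j`. -/
theorem entropy_splitting_key_step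
    {Ω 𝒳i 𝒳j 𝒵 : Type*} [Fintype Ω] [Fintype 𝒳i] [Fintype 𝒳j] [Fintype 𝒵]
    [Nonempty 𝒳i] [Nonempty 𝒳j] [DecidableEq 𝒳i] [DecidableEq 𝒳j] [DecidableEq 𝒵]
    (p : Ω → ℝ) (hp : ∀ ω, 0 ≤ p ω) (hsum : ∑ ω, p ω = 1)
    (Xi : Ω → 𝒳i) (Xj : Ω → 𝒳j) (Z : Ω → 𝒵) (A : Ω → Prop) [DecidablePred A]
    (α : ℝ)
    (hα : ∑ z, (univ : Finset (𝒳i × 𝒳j)).sup' univ_nonempty (fun xx =>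
        ∑ ω ∈ univ.filter (fun ω => Xi ω = xx.1 ∧ Xj ω = xx.2 ∧ Z ω = z), p ω)
        ≤ (2:ℝ) ^ (-α))
    (hA : ∀ ω, A ω →
      (2:ℝ) ^ (-α/2) * (∑ ω' ∈ univ.filter (fun ω' => Z ω' = Z ω), p ω')
        ≤ ∑ ω' ∈ univ.filter (fun ω' => Xj ω' = Xj ω ∧ Z ω' = Z ω), p ω') :
    ∑ z, (univ : Finset 𝒳i).sup' univ_nonempty (fun xi =>
        ∑ xj, ∑ ω ∈ univ.filter
          (fun ω => Xi ω = xi ∧ Xj ω = xj ∧ A ω ∧ Z ω = z), p ω)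
      ≤ (2:ℝ) ^ (-α/2) :=
  entropy_splitting_key_step_general p hp Xi Xj Z A α hα hA
end

section
/- Smooth leftover hash lemma: Under the same setup as the leftover hash lemma, if H_min^ε(X|Z) ≥ t for some ε ≥ 0 (i.e., there exists an event ℰ with P[ℰ] ≥ 1−ε and ∑_z max_x P[X = x, Z = z, ℰ] ≤ 2^{−t}), then the statistical distance between (F(X), F, Z) and (U, F, Z) is at most (1/2)·2^{−(t−ℓ)/2} + 2ε. -/
/-! Split the weight `p` into its parts on `E` and off `E`. The hashed distance is subadditive in
the weight and never exceeds the total mass, so the part off `E` costs at most `P[¬E] ≤ ε`.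
On `E`, fix `z` and put `w x = P[X = x, Z = z, E]`. Universality bounds the expected collision
weight `∑_f ∑_b (∑_{hash f x = b} w x)²` by `|ℱ| (∑ w² + (∑ w)² / 2^ℓ)`, so the squared
deviations of the fibre weights from their mean `(∑ w) / 2^ℓ` sum to at most
`|ℱ| ∑ w² ≤ |ℱ| (max w) (∑ w)`. Cauchy–Schwarz over `(f, b)` and then over `z` turns this into
`√(2^ℓ · 2^{-t})`. -/

open Finset

section

variable {ι Ω α β γ ℱ M : Type*}

section FiniteSums

variable [Fintype Ω] [DecidableEq α] [AddCommMonoid M]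

theorem sum_fiberwise₂ [Fintype β] [Fintype γ] [DecidableEq β] [DecidableEq γ]
    (g : Ω → β) (k : Ω → γ) (p : Ω → M) :
    ∑ b, ∑ z, ∑ ω with g ω = b ∧ k ω = z, p ω = ∑ ω, p ω := by
  rw [← sum_fiberwise univ (fun ω => (g ω, k ω)) p, ← Fintype.sum_prod_type']
  simp [Prod.ext_iff]

theorem sum_filter_fiberwise_and [Fintype α] (g : Ω → α) (P : α → Prop) [DecidablePred P]
    (R : Ω → Prop) [DecidablePred R] (p : Ω → M) :
    ∑ x with P x, ∑ ω with g ω = x ∧ R ω, p ω = ∑ ω with P (g ω) ∧ R ω, p ω := by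
  rw [← sum_fiberwise_of_maps_to (t := univ.filter P) (g := g) (by simp +contextual)]
  refine sum_congr rfl fun x hx => ?_
  rw [filter_filter]
  refine sum_congr ?_ fun _ _ => rfl
  ext ω
  simp only [mem_filter, mem_univ, true_and] at hx ⊢
  grind

theorem sum_fiberwise_and [Fintype α] (g : Ω → α) (R : Ω → Prop) [DecidablePred R]
    (p : Ω → M) :
    ∑ x, ∑ ω with g ω = x ∧ R ω, p ω = ∑ ω with R ω, p ω := by
  simpa using sum_filter_fiberwise_and g (fun _ => True) R p

end FiniteSums

theorem sum_sq_sum_fiber [Fintype α] [Fintype β] [DecidableEq β] [CommSemiring M]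
    (g : α → β) (w : α → M) :
    ∑ b, (∑ x with g x = b, w x) ^ 2 = ∑ x, w x * ∑ x' with g x' = g x, w x' := by
  rw [← sum_fiberwise univ g fun x => w x * ∑ x' with g x' = g x, w x']
  refine sum_congr rfl fun b _ => ?_
  rw [sq, sum_mul]
  refine sum_congr rfl fun x hx => ?_
  rw [(mem_filter.1 hx).2]

theorem sum_sq_sub_sum_div_card [Fintype β] (S : β → ℝ) :
    ∑ b, (S b - (∑ b', S b') / Fintype.card β) ^ 2
      = ∑ b, S b ^ 2 - (∑ b, S b) ^ 2 / Fintype.card β := by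
  rcases isEmpty_or_nonempty β with hβ | hβ
  · simp
  have hB : (Fintype.card β : ℝ) ≠ 0 := by positivity
  simp_rw [sub_sq, sum_add_distrib, sum_sub_distrib, sum_const, card_univ, nsmul_eq_mul,
    ← sum_mul, ← mul_sum]
  field_simp
  ring

/-- An average of copies of `c` is `c`, or `0` over an empty type. -/
theorem sum_const_div_card_le [Fintype ι] {c : ℝ} (hc : 0 ≤ c) :
    ∑ _i : ι, c / Fintype.card ι ≤ c := by
  rw [sum_const, card_univ, nsmul_eq_mul, mul_div_left_comm]
  exact mul_le_of_le_one_right hc (div_self_le_one _)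

theorem sqrt_two_pow_mul_two_rpow_neg (ℓ : ℕ) (t : ℝ) :
    √(2 ^ ℓ * 2 ^ (-t)) = (2 : ℝ) ^ (-(t - ℓ) / 2) := by
  rw [← Real.rpow_natCast, ← Real.rpow_add two_pos, Real.sqrt_eq_rpow,
    ← Real.rpow_mul zero_le_two]
  ring_nf

def IsUniversalHash [Fintype ℱ] [Fintype β] [DecidableEq β] (hash : ℱ → α → β) : Prop :=
  ∀ x x', x ≠ x' → (#{f | hash f x = hash f x'} : ℝ) ≤ Fintype.card ℱ / Fintype.card β

namespace IsUniversalHash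

variable [Fintype ℱ] [Fintype β] [DecidableEq α] [DecidableEq β] {hash : ℱ → α → β}

theorem card_collision_le (huniv : IsUniversalHash hash) (x x' : α) :
    (#{f | hash f x = hash f x'} : ℝ)
      ≤ Fintype.card ℱ / Fintype.card β + if x = x' then (Fintype.card ℱ : ℝ) else 0 := by
  by_cases h : x = x'
  · simp only [h, if_true]
    exact le_add_of_nonneg_of_le (by positivity) (by exact_mod_cast card_filter_le _ _)
  · simpa [h] using huniv x x' h

variable [Fintype α]

theorem sum_sum_sq_fiber_le (huniv : IsUniversalHash hash) {w : α → ℝ} (hw : 0 ≤ w) :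
    ∑ f, ∑ b, (∑ x with hash f x = b, w x) ^ 2
      ≤ Fintype.card ℱ / Fintype.card β * (∑ x, w x) ^ 2 + Fintype.card ℱ * ∑ x, w x ^ 2 := by
  have hcount : ∀ x x', ∑ f, (if hash f x' = hash f x then w x' else 0)
      = #{f | hash f x = hash f x'} * w x' := by
    intro x x'
    simp_rw [eq_comm (a := hash _ x'), ← sum_filter, sum_const, nsmul_eq_mul]
  calc ∑ f, ∑ b, (∑ x with hash f x = b, w x) ^ 2
      = ∑ x, ∑ x', w x * w x' * #{f | hash f x = hash f x'} := by
        simp_rw [sum_sq_sum_fiber, sum_filter, mul_sum]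
        rw [sum_comm]
        refine sum_congr rfl fun x _ => ?_
        rw [sum_comm]
        refine sum_congr rfl fun x' _ => ?_
        rw [← mul_sum, hcount, mul_assoc, mul_comm (w x')]
    _ ≤ ∑ x, ∑ x', w x * w x' *
          (Fintype.card ℱ / Fintype.card β + if x = x' then (Fintype.card ℱ : ℝ) else 0) := by
        gcongr with x _ x' _
        · exact mul_nonneg (hw x) (hw x')
        · exact huniv.card_collision_le x x'
    _ = _ := by
        simp_rw [mul_add, sum_add_distrib, mul_ite, mul_zero, sum_ite_eq, mem_univ, if_true]
        rw [sq, sum_mul_sum, mul_sum, mul_sum]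
        simp_rw [mul_sum]
        congr 1
        · exact sum_congr rfl fun x _ => sum_congr rfl fun x' _ => by ring
        · exact sum_congr rfl fun x _ => by ring

theorem sum_sum_sq_fiber_sub_mean_le (huniv : IsUniversalHash hash) {w : α → ℝ} (hw : 0 ≤ w) :
    ∑ f, ∑ b, (∑ x with hash f x = b, w x - (∑ x, w x) / Fintype.card β) ^ 2
      ≤ Fintype.card ℱ * ∑ x, w x ^ 2 := by
  have hvar : ∀ f, ∑ b, (∑ x with hash f x = b, w x - (∑ x, w x) / Fintype.card β) ^ 2
      = ∑ b, (∑ x with hash f x = b, w x) ^ 2 - (∑ x, w x) ^ 2 / Fintype.card β := fun f => by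
    simpa only [sum_fiberwise] using sum_sq_sub_sum_div_card fun b => ∑ x with hash f x = b, w x
  have hsq := huniv.sum_sum_sq_fiber_le hw
  rw [sum_congr rfl fun f _ => hvar f, sum_sub_distrib, sum_const, card_univ, nsmul_eq_mul]
  linarith [show (Fintype.card ℱ : ℝ) * ((∑ x, w x) ^ 2 / Fintype.card β)
    = Fintype.card ℱ / Fintype.card β * (∑ x, w x) ^ 2 by ring]

theorem sum_sum_abs_fiber_sub_mean_le (huniv : IsUniversalHash hash) {w : α → ℝ} (hw : 0 ≤ w) :
    ∑ f, ∑ b, |∑ x with hash f x = b, w x - (∑ x, w x) / Fintype.card β|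
      ≤ Fintype.card ℱ * √(Fintype.card β * ∑ x, w x ^ 2) := by
  set d : ℱ × β → ℝ := fun fb => ∑ x with hash fb.1 x = fb.2, w x - (∑ x, w x) / Fintype.card β
  have hcs := sq_sum_le_card_mul_sum_sq (s := univ) (f := fun fb => |d fb|)
  simp only [sq_abs, card_univ, Fintype.card_prod, Nat.cast_mul, Fintype.sum_prod_type, d] at hcs
  rw [← pow_le_pow_iff_left₀ (by positivity) (by positivity) two_ne_zero, mul_pow,
    Real.sq_sqrt (by positivity)]
  calc _ ≤ _ := hcs
    _ ≤ (Fintype.card ℱ * Fintype.card β : ℝ) * (Fintype.card ℱ * ∑ x, w x ^ 2) := by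
        gcongr; exact huniv.sum_sum_sq_fiber_sub_mean_le hw
    _ = _ := by ring

theorem sum_sum_abs_sub_div_card_le (huniv : IsUniversalHash hash) {w : α → ℝ} (hw : 0 ≤ w)
    {m : ℝ} (hm : ∀ x, w x ≤ m) :
    ∑ f, ∑ b, |(∑ x with hash f x = b, w x) / Fintype.card ℱ
        - (1 / Fintype.card β) * (∑ x, w x) / Fintype.card ℱ|
      ≤ √(Fintype.card β * m * ∑ x, w x) := by
  have hsq : ∑ x, w x ^ 2 ≤ m * ∑ x, w x := by
    rw [mul_sum]
    gcongr with x
    rw [sq]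
    exact mul_le_mul_of_nonneg_right (hm x) (hw x)
  have hdiv : ∀ a : ℝ, |a / Fintype.card ℱ - (1 / Fintype.card β) * (∑ x, w x) / Fintype.card ℱ|
      = |a - (∑ x, w x) / Fintype.card β| / Fintype.card ℱ := fun a => by
    rw [one_div_mul_eq_div, ← sub_div, abs_div, Nat.abs_cast]
  simp_rw [hdiv, ← sum_div]
  refine div_le_of_le_mul₀ (Nat.cast_nonneg _) (Real.sqrt_nonneg _) ?_
  calc _ ≤ Fintype.card ℱ * √(Fintype.card β * ∑ x, w x ^ 2) :=
        huniv.sum_sum_abs_fiber_sub_mean_le hw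
    _ ≤ _ := by
        rw [mul_comm, mul_assoc]
        gcongr

end IsUniversalHash

/-- Statistical distance between the laws of `(F(X), F, Z)` and `(U, F, Z)` under the weight `p`,
for `F` uniform on `ℱ` and `U` uniform on `β`, both independent of `(X, Z)`. -/
noncomputable def hashStatDist [Fintype Ω] [Fintype β] [Fintype γ] [Fintype ℱ]
    [DecidableEq β] [DecidableEq γ]
    (hash : ℱ → α → β) (X : Ω → α) (Z : Ω → γ) (p : Ω → ℝ) : ℝ :=
  (1 / 2) * ∑ b : β, ∑ f : ℱ, ∑ z : γ,
    |(∑ ω with hash f (X ω) = b ∧ Z ω = z, p ω) / Fintype.card ℱ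
      - (1 / Fintype.card β) * (∑ ω with Z ω = z, p ω) / Fintype.card ℱ|

section hashStatDist

variable [Fintype Ω] [Fintype β] [Fintype γ] [Fintype ℱ] [DecidableEq β] [DecidableEq γ]
  (hash : ℱ → α → β) (X : Ω → α) (Z : Ω → γ)

theorem hashStatDist_add_le (p q : Ω → ℝ) :
    hashStatDist hash X Z (p + q) ≤ hashStatDist hash X Z p + hashStatDist hash X Z q := by
  unfold hashStatDist
  rw [← mul_add]
  simp_rw [← sum_add_distrib]
  gcongr with b _ f _ z _
  simp only [Pi.add_apply, sum_add_distrib]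
  exact (abs_add_le _ _).trans_eq' (congrArg abs (by ring))

theorem hashStatDist_le_sum {p : Ω → ℝ} (hp : 0 ≤ p) :
    hashStatDist hash X Z p ≤ ∑ ω, p ω := by
  have hP : 0 ≤ ∑ ω, p ω := sum_nonneg fun ω _ => hp ω
  have hpos : ∀ s : Finset Ω, 0 ≤ ∑ ω ∈ s, p ω := fun s => sum_nonneg fun ω _ => hp ω
  unfold hashStatDist
  calc (1 / 2) * ∑ b : β, ∑ f : ℱ, ∑ z : γ,
        |(∑ ω with hash f (X ω) = b ∧ Z ω = z, p ω) / Fintype.card ℱ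
          - (1 / Fintype.card β) * (∑ ω with Z ω = z, p ω) / Fintype.card ℱ|
      ≤ (1 / 2) * ∑ b : β, ∑ f : ℱ, ∑ z : γ,
        ((∑ ω with hash f (X ω) = b ∧ Z ω = z, p ω) / Fintype.card ℱ
          + (∑ ω with Z ω = z, p ω) / Fintype.card β / Fintype.card ℱ) := by
        gcongr with b _ f _ z _
        refine (abs_sub _ _).trans_eq ?_
        rw [abs_of_nonneg (div_nonneg (hpos _) (Nat.cast_nonneg _)),
          abs_of_nonneg (div_nonneg (mul_nonneg (by positivity) (hpos _)) (Nat.cast_nonneg _))]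
        ring
    _ = (1 / 2) * (∑ f : ℱ, (∑ ω, p ω) / Fintype.card ℱ
          + ∑ _b : β, ∑ _f : ℱ, (∑ ω, p ω) / Fintype.card β / Fintype.card ℱ) := by
        simp_rw [sum_add_distrib]
        congr 2
        · rw [sum_comm]
          refine sum_congr rfl fun f _ => ?_
          simp_rw [← sum_fiberwise₂ (fun ω => hash f (X ω)) Z p, sum_div]
        · refine sum_congr rfl fun b _ => sum_congr rfl fun f _ => ?_
          simp_rw [← sum_fiberwise univ Z p, sum_div]
    _ ≤ (1 / 2) * (∑ ω, p ω + ∑ ω, p ω) := by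
        gcongr
        · exact sum_const_div_card_le hP
        · exact (sum_le_sum fun _ _ => sum_const_div_card_le (by positivity)).trans
            (sum_const_div_card_le hP)
    _ = ∑ ω, p ω := by ring

theorem hashStatDist_le_of_event {p : Ω → ℝ} (hp : 0 ≤ p) (E : Ω → Prop) [DecidablePred E] :
    hashStatDist hash X Z p
      ≤ hashStatDist hash X Z (fun ω => if E ω then p ω else 0) + ∑ ω with ¬E ω, p ω := by
  have hsplit : p = (fun ω => if E ω then p ω else 0) + fun ω => if ¬E ω then p ω else 0 := by
    ext ω
    by_cases h : E ω <;> simp [h]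
  calc hashStatDist hash X Z p
      ≤ hashStatDist hash X Z (fun ω => if E ω then p ω else 0)
        + hashStatDist hash X Z (fun ω => if ¬E ω then p ω else 0) := by
        conv_lhs => rw [hsplit]
        exact hashStatDist_add_le hash X Z _ _
    _ ≤ _ := by
        rw [sum_filter]
        gcongr
        exact hashStatDist_le_sum hash X Z fun ω => ite_nonneg (hp ω) le_rfl

variable {hash} in
theorem IsUniversalHash.hashStatDist_le [Fintype α] [Nonempty α] [DecidableEq α]
    (huniv : IsUniversalHash hash) {p : Ω → ℝ} (hp : 0 ≤ p) {m : γ → ℝ}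
    (hm : ∀ x z, ∑ ω with X ω = x ∧ Z ω = z, p ω ≤ m z) :
    hashStatDist hash X Z p ≤ (1 / 2) * √(Fintype.card β * (∑ z, m z) * ∑ ω, p ω) := by
  set w : γ → α → ℝ := fun z x => ∑ ω with X ω = x ∧ Z ω = z, p ω
  have hw : ∀ z, 0 ≤ w z := fun z x => sum_nonneg fun ω _ => hp ω
  have hm0 : ∀ z, 0 ≤ m z := fun z => (hw z (Classical.arbitrary α)).trans (hm _ z)
  have hfiber : ∀ f b z, ∑ ω with hash f (X ω) = b ∧ Z ω = z, p ω
      = ∑ x with hash f x = b, w z x := fun f b z =>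
    (sum_filter_fiberwise_and X (fun x => hash f x = b) (fun ω => Z ω = z) p).symm
  have hmarg : ∀ z, ∑ ω with Z ω = z, p ω = ∑ x, w z x := fun z =>
    (sum_fiberwise_and X (fun ω => Z ω = z) p).symm
  unfold hashStatDist
  gcongr
  calc ∑ b : β, ∑ f : ℱ, ∑ z : γ, _
      = ∑ z : γ, ∑ f : ℱ, ∑ b : β,
          |(∑ x with hash f x = b, w z x) / Fintype.card ℱ
            - (1 / Fintype.card β) * (∑ x, w z x) / Fintype.card ℱ| := by
        rw [sum_comm, sum_congr rfl fun f _ => sum_comm, sum_comm]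
        simp_rw [hfiber, hmarg]
    _ ≤ ∑ z, √(Fintype.card β) * (√(m z) * √(∑ x, w z x)) := by
        gcongr with z
        rw [← Real.sqrt_mul (hm0 z), ← Real.sqrt_mul (Nat.cast_nonneg _), ← mul_assoc]
        exact huniv.sum_sum_abs_sub_div_card_le (hw z) fun x => hm x z
    _ ≤ √(Fintype.card β) * (√(∑ z, m z) * √(∑ z, ∑ x, w z x)) := by
        rw [← mul_sum]
        gcongr
        exact Real.sum_sqrt_mul_sqrt_le _ hm0 fun z => sum_nonneg fun x _ => hw z x
    _ = √(Fintype.card β * (∑ z, m z) * ∑ ω, p ω) := by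
        simp_rw [← hmarg, sum_fiberwise]
        rw [Real.sqrt_mul (mul_nonneg (Nat.cast_nonneg _) (sum_nonneg fun z _ => hm0 z)),
          Real.sqrt_mul (Nat.cast_nonneg _), mul_assoc]

end hashStatDist

end

theorem smooth_leftover_hash_lemma_general
    {Ω 𝒳 𝒵 ℱ : Type*} [Fintype Ω] [Fintype 𝒳] [Fintype 𝒵] [Fintype ℱ]
    [Nonempty 𝒳] [DecidableEq 𝒳] [DecidableEq 𝒵]
    (ℓ : ℕ) (t ε : ℝ)
    (p : Ω → ℝ) (hp : ∀ ω, 0 ≤ p ω) (hsum : ∑ ω, p ω = 1)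
    (X : Ω → 𝒳) (Z : Ω → 𝒵) (E : Ω → Prop) [DecidablePred E]
    (hPE : 1 - ε ≤ ∑ ω ∈ univ.filter (fun ω => E ω), p ω)
    (hsmooth : ∑ z, (univ : Finset 𝒳).sup' univ_nonempty (fun x =>
        ∑ ω ∈ univ.filter (fun ω => X ω = x ∧ Z ω = z ∧ E ω), p ω) ≤ (2:ℝ) ^ (-t))
    (hash : ℱ → 𝒳 → (Fin ℓ → Bool))
    (huniv2 : ∀ x x' : 𝒳, x ≠ x' →
      (((univ : Finset ℱ).filter (fun f => hash f x = hash f x')).card : ℝ)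
        ≤ (Fintype.card ℱ : ℝ) / 2 ^ ℓ) :
    (1 / 2) * ∑ b : Fin ℓ → Bool, ∑ f : ℱ, ∑ z : 𝒵,
        |(∑ ω ∈ univ.filter (fun ω => hash f (X ω) = b ∧ Z ω = z), p ω)
              / (Fintype.card ℱ : ℝ)
          - (1 / 2 ^ ℓ) * (∑ ω ∈ univ.filter (fun ω => Z ω = z), p ω)
              / (Fintype.card ℱ : ℝ)|
      ≤ (1 / 2) * (2:ℝ) ^ (-(t - ℓ) / 2) + 2 * ε := by
  have hB : (Fintype.card (Fin ℓ → Bool) : ℝ) = 2 ^ ℓ := by simp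
  have huniv : IsUniversalHash hash := by rwa [IsUniversalHash, hB]
  have hsplit := sum_filter_add_sum_filter_not univ E p
  have hbad : ∑ ω with ¬E ω, p ω ≤ ε := by linarith
  have hε : 0 ≤ ε := (sum_nonneg fun ω _ => hp ω).trans hbad
  have hpE : ∀ ω, 0 ≤ if E ω then p ω else 0 := fun ω => ite_nonneg (hp ω) le_rfl
  have hgood : ∑ ω, (if E ω then p ω else 0) ≤ 1 := by
    rw [← sum_filter]
    linarith [(sum_nonneg fun ω _ => hp ω : 0 ≤ ∑ ω with ¬E ω, p ω)]
  have hm : ∀ x z, ∑ ω with X ω = x ∧ Z ω = z, (if E ω then p ω else 0)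
      ≤ (univ : Finset 𝒳).sup' univ_nonempty
          (fun x => ∑ ω ∈ univ.filter (fun ω => X ω = x ∧ Z ω = z ∧ E ω), p ω) := fun x z => by
    rw [← sum_filter, filter_filter]
    simp only [and_assoc]
    exact le_sup' (fun x => ∑ ω ∈ univ.filter (fun ω => X ω = x ∧ Z ω = z ∧ E ω), p ω) (mem_univ x)
  rw [← hB]
  calc hashStatDist hash X Z p
      ≤ hashStatDist hash X Z (fun ω => if E ω then p ω else 0) + ∑ ω with ¬E ω, p ω :=
        hashStatDist_le_of_event hash X Z hp E
    _ ≤ (1 / 2) * √(2 ^ ℓ * 2 ^ (-t) * 1) + ε := by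
        gcongr
        refine (huniv.hashStatDist_le X Z hpE hm).trans ?_
        rw [hB]
        gcongr
        exact sum_nonneg fun ω _ => hpE ω
    _ ≤ (1 / 2) * (2:ℝ) ^ (-(t - ℓ) / 2) + 2 * ε := by
        rw [mul_one, sqrt_two_pow_mul_two_rpow_neg]
        linarith

/-- Smooth leftover hash lemma: if there is an event `ℰ` with `P[ℰ] ≥ 1 - ε` and
`∑_z max_x P[X = x, Z = z, ℰ] ≤ 2^{-t}` (i.e. `H_min^ε(X|Z) ≥ t`), then the
distribution of `(F(X), F, Z)`, with `F` uniform over a universal-2 family and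
independent of `(X, Z, ℰ)` (product space model), is within statistical distance
`(1/2)·2^{-(t-ℓ)/2} + 2ε` of `(U, F, Z)`. -/
theorem smooth_leftover_hash_lemma
    {Ω 𝒳 𝒵 ℱ : Type*} [Fintype Ω] [Fintype 𝒳] [Fintype 𝒵] [Fintype ℱ]
    [Nonempty 𝒳] [Nonempty ℱ] [DecidableEq 𝒳] [DecidableEq 𝒵]
    (ℓ : ℕ) (t ε : ℝ) (hε : 0 ≤ ε)
    (p : Ω → ℝ) (hp : ∀ ω, 0 ≤ p ω) (hsum : ∑ ω, p ω = 1)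
    (X : Ω → 𝒳) (Z : Ω → 𝒵) (E : Ω → Prop) [DecidablePred E]
    (hPE : 1 - ε ≤ ∑ ω ∈ univ.filter (fun ω => E ω), p ω)
    (hsmooth : ∑ z, (univ : Finset 𝒳).sup' univ_nonempty (fun x =>
        ∑ ω ∈ univ.filter (fun ω => X ω = x ∧ Z ω = z ∧ E ω), p ω) ≤ (2:ℝ) ^ (-t))
    (hash : ℱ → 𝒳 → (Fin ℓ → Bool))
    (huniv2 : ∀ x x' : 𝒳, x ≠ x' →
      (((univ : Finset ℱ).filter (fun f => hash f x = hash f x')).card : ℝ)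
        ≤ (Fintype.card ℱ : ℝ) / 2 ^ ℓ) :
    (1 / 2) * ∑ b : Fin ℓ → Bool, ∑ f : ℱ, ∑ z : 𝒵,
        |(∑ ω ∈ univ.filter (fun ω => hash f (X ω) = b ∧ Z ω = z), p ω)
              / (Fintype.card ℱ : ℝ)
          - (1 / 2 ^ ℓ) * (∑ ω ∈ univ.filter (fun ω => Z ω = z), p ω)
              / (Fintype.card ℱ : ℝ)|
      ≤ (1 / 2) * (2:ℝ) ^ (-(t - ℓ) / 2) + 2 * ε :=
  smooth_leftover_hash_lemma_general ℓ t ε p hp hsum X Z E hPE hsmooth hash huniv2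
end
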